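/- Let τ > 0, let f : (0,∞) → [0,∞) be measurable with ∫₀^∞ f(λ) dλ < ∞ and ∫₀^∞ f(λ)/λ dλ < ∞, and define g(x) = ∫₀^∞ e^{−λx} f(λ) dλ for x ≥ 0. Then for every t ≥ 0, ∫₀^∞ sin(2πu/τ) sin(2π(t+u)/τ) g(t+u) du = 2πτ sin(2πt/τ) ∫₀^∞ e^{−λt}/(λ²τ² + 16π²) f(λ) dλ + 8π² cos(2πt/τ) ∫₀^∞ e^{−λt}/(λ(λ²τ² + 16π²)) f(λ) dλ. -/

import Mathlib

open MeasureTheory Set Real Filter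

lemma integrableOn_cexp_mul (z : ℂ) (hz : z.re < 0) :
    IntegrableOn (fun u : ℝ => Complex.exp (z * u)) (Ioi 0) := by
  have h : IntegrableOn (fun u : ℝ => Real.exp (z.re * u)) (Ioi 0) := by
    simpa [neg_neg, neg_mul] using exp_neg_integrableOn_Ioi 0 (b := -z.re) (by linarith)
  refine h.congr' ?_ ?_
  · exact (Complex.continuous_exp.comp (by continuity)).aestronglyMeasurable
  · filter_upwards with u
    rw [Complex.norm_exp]
    norm_num [Complex.mul_re]

lemma hasDerivAt_cexp_mul (z : ℂ) (u : ℝ) :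
    HasDerivAt (fun u : ℝ => Complex.exp (z * u)) (Complex.exp (z * u) * z) u := by
  have h1 : HasDerivAt (fun u : ℝ => z * (u:ℂ)) z u := by
    simpa using (Complex.ofRealCLM.hasDerivAt (x := u)).const_mul z
  exact (Complex.hasDerivAt_exp (z * u)).comp u h1

lemma integral_cexp_mul_Ioi (z : ℂ) (hz : z.re < 0) :
    ∫ u : ℝ in Ioi 0, Complex.exp (z * u) = -1 / z := by
  have hz0 : z ≠ 0 := fun h => by simp [h] at hz
  have hderiv : ∀ u ∈ Ici (0:ℝ), HasDerivAt (fun u : ℝ => Complex.exp (z * u) / z)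
      (Complex.exp (z * u)) u := by
    intro u _
    simpa [mul_div_assoc, mul_div_cancel_right₀ _ hz0] using
      (hasDerivAt_cexp_mul z u).div_const z
  have htend : Tendsto (fun u : ℝ => Complex.exp (z * u) / z) atTop (nhds 0) := by
    rw [tendsto_zero_iff_norm_tendsto_zero]
    have h2 : Tendsto (fun u : ℝ => z.re * u) atTop atBot :=
      tendsto_id.const_mul_atTop_of_neg hz
    have : Tendsto (fun u : ℝ => Real.exp (z.re * u) / ‖z‖) atTop (nhds 0) := by
      simpa using (Real.tendsto_exp_atBot.comp h2).div_const ‖z‖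
    refine this.congr fun u => ?_
    simp [Complex.norm_exp, Complex.mul_re]
  have := integral_Ioi_of_hasDerivAt_of_tendsto' hderiv (integrableOn_cexp_mul z hz) htend
  simpa [neg_div] using this

lemma integrableOn_exp_mul_cos (b c d : ℝ) (hb : 0 < b) :
    IntegrableOn (fun u : ℝ => Real.exp (-b * u) * Real.cos (c * u + d)) (Ioi 0) := by
  have h : IntegrableOn (fun u : ℝ => Real.exp (-b * u)) (Ioi 0) := by
    simpa [neg_mul] using exp_neg_integrableOn_Ioi 0 hb
  refine h.mono' ?_ ?_
  · exact ((Real.continuous_exp.comp (by continuity)).mul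
      (Real.continuous_cos.comp (by continuity))).aestronglyMeasurable
  · filter_upwards with u
    rw [norm_mul, Real.norm_eq_abs, Real.norm_eq_abs, abs_exp]
    nlinarith [abs_cos_le_one (c * u + d), Real.exp_pos (-b * u), abs_nonneg (Real.cos (c*u+d))]

lemma integral_exp_mul_cos (b c d : ℝ) (hb : 0 < b) :
    ∫ u : ℝ in Ioi 0, Real.exp (-b * u) * Real.cos (c * u + d)
      = (b * Real.cos d - c * Real.sin d) / (b ^ 2 + c ^ 2) := by
  set z : ℂ := -b + c * Complex.I with hzdef
  have hzre : z.re < 0 := by simp [hzdef, hb]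
  have hz0 : z ≠ 0 := fun h => by rw [h] at hzre; simp at hzre
  have key : ∫ u : ℝ in Ioi 0, Complex.exp (z * u) * Complex.exp (d * Complex.I)
      = (-1 / z) * Complex.exp (d * Complex.I) := by
    rw [integral_mul_const, integral_cexp_mul_Ioi z hzre]
  have hre : ∀ u : ℝ, (Complex.exp (z * u) * Complex.exp (d * Complex.I)).re
      = Real.exp (-b * u) * Real.cos (c * u + d) := by
    intro u
    rw [← Complex.exp_add, Complex.exp_re]
    congr 1
    · congr 1; simp [hzdef, Complex.add_re, Complex.mul_re]
    · congr 1
      simp only [hzdef, Complex.add_im, Complex.mul_im, Complex.add_re, Complex.mul_re,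
        Complex.ofReal_re, Complex.ofReal_im, Complex.I_re, Complex.I_im, Complex.neg_re,
        Complex.neg_im]
      ring
  have hint : IntegrableOn (fun u : ℝ => Complex.exp (z * u) * Complex.exp (d * Complex.I))
      (Ioi 0) := (integrableOn_cexp_mul z hzre).mul_const _
  have hleft : ∫ u : ℝ in Ioi 0, Real.exp (-b * u) * Real.cos (c * u + d)
      = ((-1 / z) * Complex.exp (d * Complex.I)).re := by
    rw [← key]
    calc ∫ u : ℝ in Ioi 0, Real.exp (-b * u) * Real.cos (c * u + d)
        = ∫ u : ℝ in Ioi 0, (Complex.exp (z * u) * Complex.exp (d * Complex.I)).re :=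
          setIntegral_congr_fun measurableSet_Ioi fun u _ => (hre u).symm
      _ = (∫ u : ℝ in Ioi 0, Complex.exp (z * u) * Complex.exp (d * Complex.I)).re := by
          simpa using Complex.reCLM.integral_comp_comm hint
  rw [hleft]
  have hbc : (b:ℂ) ^ 2 + (c:ℂ) ^ 2 ≠ 0 := by
    have : ((b^2 + c^2 : ℝ):ℂ) ≠ 0 := by
      exact_mod_cast (by positivity : (b^2 + c^2:ℝ) ≠ 0)
    push_cast at this; exact this
  have : (-1 / z) * Complex.exp (d * Complex.I)
      = ((b * Real.cos d - c * Real.sin d) / (b ^ 2 + c ^ 2) : ℝ)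
        + ((b * Real.sin d + c * Real.cos d) / (b ^ 2 + c ^ 2) : ℝ) * Complex.I := by
    have hexp : Complex.exp ((d:ℂ) * Complex.I) = Real.cos d + Real.sin d * Complex.I := by
      rw [Complex.exp_mul_I, ← Complex.ofReal_cos, ← Complex.ofReal_sin]
    rw [hexp, hzdef]
    have hz0' : (-(b:ℂ) + c * Complex.I) ≠ 0 := by rw [← hzdef]; exact hz0
    push_cast
    field_simp
    ring_nf
    simp [Complex.I_sq]
    ring
  rw [this]
  simp only [Complex.add_re, Complex.ofReal_re, Complex.mul_re, Complex.ofReal_im,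
    Complex.I_re, Complex.I_im]
  ring

lemma sin_sin_exp_eq (a t l : ℝ) (u : ℝ) :
    Real.sin (a * u) * Real.sin (a * (t + u)) * Real.exp (-l * (t + u))
      = Real.exp (-l * t) * ((1/2) * (Real.exp (-l * u) * Real.cos (0 * u + a * t))
          - (1/2) * (Real.exp (-l * u) * Real.cos (2 * a * u + a * t))) := by
  have h1 : Real.sin (a * u) * Real.sin (a * (t + u))
      = (Real.cos (a * t) - Real.cos (2 * a * u + a * t)) / 2 := by
    have hc1 := Real.cos_sub (a * (t + u)) (a * u)
    have hc2 := Real.cos_add (a * (t + u)) (a * u)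
    have e1 : a * (t + u) - a * u = a * t := by ring
    have e2 : a * (t + u) + a * u = 2 * a * u + a * t := by ring
    rw [e1] at hc1; rw [e2] at hc2
    nlinarith [hc1, hc2]
  rw [h1, show (-l*(t+u)) = -l*t + -l*u by ring, Real.exp_add,
    show (0:ℝ) * u + a*t = a*t by ring]
  ring

lemma integrableOn_sin_sin_exp (a t l : ℝ) (hl : 0 < l) :
    IntegrableOn (fun u : ℝ =>
      Real.sin (a * u) * Real.sin (a * (t + u)) * Real.exp (-l * (t + u))) (Ioi 0) := by
  have h2 : IntegrableOn (fun u : ℝ => Real.exp (-l * t) *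
      ((1/2) * (Real.exp (-l * u) * Real.cos (0 * u + a * t))
        - (1/2) * (Real.exp (-l * u) * Real.cos (2 * a * u + a * t)))) (Ioi 0) := by
    apply Integrable.const_mul
    exact ((integrableOn_exp_mul_cos l 0 (a*t) hl).const_mul (1/2)).sub
      ((integrableOn_exp_mul_cos l (2*a) (a*t) hl).const_mul (1/2))
  exact IntegrableOn.congr_fun h2 (fun u _ => (sin_sin_exp_eq a t l u).symm) measurableSet_Ioi

lemma integral_sin_sin_exp (a t l : ℝ) (hl : 0 < l) :
    ∫ u : ℝ in Ioi 0, Real.sin (a * u) * Real.sin (a * (t + u)) * Real.exp (-l * (t + u))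
      = Real.exp (-l * t) * (a * Real.sin (a * t) / (l ^ 2 + 4 * a ^ 2)
          + 2 * a ^ 2 * Real.cos (a * t) / (l * (l ^ 2 + 4 * a ^ 2))) := by
  have hcongr : ∫ u : ℝ in Ioi 0,
      Real.sin (a * u) * Real.sin (a * (t + u)) * Real.exp (-l * (t + u))
      = ∫ u : ℝ in Ioi 0, Real.exp (-l * t) *
          ((1/2) * (Real.exp (-l * u) * Real.cos (0 * u + a * t))
            - (1/2) * (Real.exp (-l * u) * Real.cos (2 * a * u + a * t))) :=
    setIntegral_congr_fun measurableSet_Ioi fun u _ => sin_sin_exp_eq a t l u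
  rw [hcongr, integral_const_mul, integral_sub
      ((integrableOn_exp_mul_cos l 0 (a*t) hl).const_mul (1/2))
      ((integrableOn_exp_mul_cos l (2*a) (a*t) hl).const_mul (1/2)),
    integral_const_mul, integral_const_mul,
    integral_exp_mul_cos l 0 (a*t) hl, integral_exp_mul_cos l (2*a) (a*t) hl]
  have h4 : l^2 + 4*a^2 > 0 := by positivity
  field_simp
  ring

lemma integrableOn_exp_neg_mul (l : ℝ) (hl : 0 < l) :
    IntegrableOn (fun u : ℝ => Real.exp (-l * u)) (Ioi 0) := by
  simpa [neg_mul] using exp_neg_integrableOn_Ioi 0 hl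

lemma integral_exp_neg_mul_Ioi (l : ℝ) (hl : 0 < l) :
    ∫ u : ℝ in Ioi 0, Real.exp (-l * u) = 1 / l := by
  have h := integral_exp_mul_cos l 0 0 hl
  simp only [zero_mul, zero_add, Real.cos_zero, Real.sin_zero, mul_one, mul_zero, sub_zero] at h
  rw [h]
  field_simp
  ring

/-- Autocovariance integral for a superposition trawl `g(x) = ∫₀^∞ e^{−λx} f(λ) dλ`
with sinusoidal periodic kernel. -/
theorem superposition_trawl_autocovariance
    (τ : ℝ) (hτ : 0 < τ)
    (f : ℝ → ℝ) (hf_meas : Measurable f)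
    (hf_nonneg : ∀ l ∈ Ioi (0:ℝ), 0 ≤ f l)
    (hf_int : IntegrableOn f (Ioi 0))
    (hf_int' : IntegrableOn (fun l => f l / l) (Ioi 0))
    (g : ℝ → ℝ)
    (hg : ∀ x ≥ (0:ℝ), g x = ∫ l in Ioi (0:ℝ), Real.exp (-l * x) * f l) :
    ∀ t ≥ (0:ℝ),
      ∫ u in Ioi (0:ℝ),
          Real.sin (2 * π * u / τ) * Real.sin (2 * π * (t + u) / τ) * g (t + u)
        = 2 * π * τ * Real.sin (2 * π * t / τ) *
              (∫ l in Ioi (0:ℝ), Real.exp (-l * t) / (l ^ 2 * τ ^ 2 + 16 * π ^ 2) * f l)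
          + 8 * π ^ 2 * Real.cos (2 * π * t / τ) *
              (∫ l in Ioi (0:ℝ),
                Real.exp (-l * t) / (l * (l ^ 2 * τ ^ 2 + 16 * π ^ 2)) * f l) := by
  intro t ht
  have hπ : (0:ℝ) < π := Real.pi_pos
  set a : ℝ := 2 * π / τ with ha
  have ha_pos : 0 < a := by positivity
  -- the product-space integrand (in order (l, u))
  set K : ℝ × ℝ → ℝ := fun p =>
    Real.sin (a * p.2) * Real.sin (a * (t + p.2)) * Real.exp (-p.1 * (t + p.2)) * f p.1
    with hK
  have hK_meas : Measurable K := by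
    apply Measurable.mul
    apply Measurable.mul
    apply Measurable.mul
    · exact Real.measurable_sin.comp (measurable_const.mul measurable_snd)
    · exact Real.measurable_sin.comp (measurable_const.mul (measurable_const.add measurable_snd))
    · exact Real.measurable_exp.comp ((measurable_fst.neg).mul
        (measurable_const.add measurable_snd))
    · exact hf_meas.comp measurable_fst
  -- sections in u are integrable for l > 0
  have hsec : ∀ l ∈ Ioi (0:ℝ), IntegrableOn (fun u => K (l, u)) (Ioi 0) := by
    intro l hl
    exact (integrableOn_sin_sin_exp a t l hl).mul_const (f l)
  -- integrability on the product space
  have hbound : IntegrableOn (fun l => |f l| * (1 / l)) (Ioi 0) := by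
    refine IntegrableOn.congr_fun hf_int'.norm (fun l hl => ?_) measurableSet_Ioi
    rw [Real.norm_eq_abs, abs_div, abs_of_pos (show (0:ℝ) < l from hl), div_eq_mul_one_div]
  have hKprod : Integrable K
      ((volume.restrict (Ioi (0:ℝ))).prod (volume.restrict (Ioi (0:ℝ)))) := by
    rw [integrable_prod_iff hK_meas.aestronglyMeasurable]
    constructor
    · filter_upwards [ae_restrict_mem measurableSet_Ioi] with l hl
      exact hsec l hl
    · refine hbound.mono' ?_ ?_
      · exact (hK_meas.norm.aestronglyMeasurable).integral_prod_right'
      · filter_upwards [ae_restrict_mem measurableSet_Ioi] with l hl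
        rw [Real.norm_eq_abs, abs_of_nonneg (integral_nonneg fun u => norm_nonneg _)]
        have hInt1 : IntegrableOn (fun u => ‖K (l, u)‖) (Ioi 0) := (hsec l hl).norm
        have hInt2 : IntegrableOn (fun u => Real.exp (-l * u) * |f l|) (Ioi 0) :=
          (integrableOn_exp_neg_mul l hl).mul_const _
        have hle : ∀ u : ℝ, ‖K (l, u)‖ ≤ Real.exp (-l * u) * |f l| := by
          intro u
          rw [hK]
          simp only [Real.norm_eq_abs, abs_mul]
          have h1 : |Real.sin (a * u)| ≤ 1 := abs_sin_le_one _
          have h2 : |Real.sin (a * (t + u))| ≤ 1 := abs_sin_le_one _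
          have h3 : |Real.exp (-l * (t + u))| ≤ Real.exp (-l * u) := by
            rw [abs_exp]
            apply Real.exp_le_exp.mpr
            nlinarith [hl.out]
          calc |Real.sin (a * u)| * |Real.sin (a * (t + u))| * |Real.exp (-l * (t + u))| * |f l|
              ≤ 1 * 1 * Real.exp (-l * u) * |f l| := by
                apply mul_le_mul_of_nonneg_right _ (abs_nonneg _)
                apply mul_le_mul _ h3 (abs_nonneg _) (by norm_num)
                apply mul_le_mul h1 h2 (abs_nonneg _) zero_le_one
            _ = Real.exp (-l * u) * |f l| := by ring
        calc ∫ u in Ioi (0:ℝ), ‖K (l, u)‖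
            ≤ ∫ u in Ioi (0:ℝ), Real.exp (-l * u) * |f l| :=
              integral_mono hInt1 hInt2 hle
          _ = (1 / l) * |f l| := by rw [integral_mul_const, integral_exp_neg_mul_Ioi l hl]
          _ = |f l| * (1 / l) := by ring
  -- rewrite LHS as an iterated integral
  have hLHS : (∫ u in Ioi (0:ℝ),
        Real.sin (2 * π * u / τ) * Real.sin (2 * π * (t + u) / τ) * g (t + u))
      = ∫ u in Ioi (0:ℝ), ∫ l in Ioi (0:ℝ), K (l, u) := by
    refine setIntegral_congr_fun measurableSet_Ioi fun u hu => ?_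
    have hu0 : 0 < u := hu
    have htu : (0:ℝ) ≤ t + u := by linarith
    have e1 : 2 * π * u / τ = a * u := by rw [ha]; ring
    have e2 : 2 * π * (t + u) / τ = a * (t + u) := by rw [ha]; ring
    rw [e1, e2, hg (t + u) htu, ← integral_const_mul]
    refine setIntegral_congr_fun measurableSet_Ioi fun l _ => ?_
    simp only [hK]; ring
  have hswap := integral_integral_swap (f := fun l u => K (l, u)) hKprod
  -- the two target integrands
  set h₁ : ℝ → ℝ := fun l => Real.exp (-l * t) / (l ^ 2 * τ ^ 2 + 16 * π ^ 2) * f l with hh₁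
  set h₂ : ℝ → ℝ := fun l =>
    Real.exp (-l * t) / (l * (l ^ 2 * τ ^ 2 + 16 * π ^ 2)) * f l with hh₂
  have hπ3 : (3:ℝ) < π := Real.pi_gt_three
  -- pointwise value of the inner u-integral
  have hpt : ∀ l ∈ Ioi (0:ℝ), (∫ u in Ioi (0:ℝ), K (l, u))
      = 2 * π * τ * Real.sin (2 * π * t / τ) * h₁ l
        + 8 * π ^ 2 * Real.cos (2 * π * t / τ) * h₂ l := by
    intro l hl
    have hl0 : 0 < l := hl
    have e3 : a * t = 2 * π * t / τ := by rw [ha]; ring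
    have : (∫ u in Ioi (0:ℝ), K (l, u))
        = (∫ u in Ioi (0:ℝ),
            Real.sin (a * u) * Real.sin (a * (t + u)) * Real.exp (-l * (t + u))) * f l := by
      rw [← integral_mul_const]
    rw [this, integral_sin_sin_exp a t l hl0, e3]
    simp only [hh₁, hh₂, ha]
    have h1 : l ^ 2 + 4 * (2 * π / τ) ^ 2 ≠ 0 := by positivity
    have h2 : l ^ 2 * τ ^ 2 + 16 * π ^ 2 ≠ 0 := by positivity
    field_simp
    ring
  -- integrability of the two pieces
  have hh₁_meas : Measurable h₁ := by
    apply Measurable.mul _ hf_meas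
    apply Measurable.div
    · exact Real.measurable_exp.comp (measurable_id.neg.mul measurable_const)
    · exact ((measurable_id.pow_const 2).mul measurable_const).add measurable_const
  have hh₂_meas : Measurable h₂ := by
    apply Measurable.mul _ hf_meas
    apply Measurable.div
    · exact Real.measurable_exp.comp (measurable_id.neg.mul measurable_const)
    · exact measurable_id.mul (((measurable_id.pow_const 2).mul measurable_const).add
        measurable_const)
  have hDen : ∀ l : ℝ, (1:ℝ) ≤ l ^ 2 * τ ^ 2 + 16 * π ^ 2 := by
    intro l
    nlinarith [sq_nonneg l, sq_nonneg τ, sq_nonneg (l*τ)]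
  have hh₁_int : IntegrableOn h₁ (Ioi 0) := by
    refine Integrable.mono hf_int hh₁_meas.aestronglyMeasurable ?_
    filter_upwards [ae_restrict_mem measurableSet_Ioi] with l hl
    have hl0 : 0 < l := hl
    rw [hh₁]
    simp only [Real.norm_eq_abs, abs_mul]
    have hexp : Real.exp (-l * t) ≤ 1 := Real.exp_le_one_iff.mpr (by nlinarith)
    have : |Real.exp (-l * t) / (l ^ 2 * τ ^ 2 + 16 * π ^ 2)| ≤ 1 := by
      rw [abs_div, abs_exp, abs_of_pos (by positivity : (0:ℝ) < l ^ 2 * τ ^ 2 + 16 * π ^ 2)]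
      rw [div_le_one (by positivity)]
      calc Real.exp (-l * t) ≤ 1 := hexp
        _ ≤ l ^ 2 * τ ^ 2 + 16 * π ^ 2 := hDen l
    calc |Real.exp (-l * t) / (l ^ 2 * τ ^ 2 + 16 * π ^ 2)| * |f l|
        ≤ 1 * |f l| := mul_le_mul_of_nonneg_right this (abs_nonneg _)
      _ = |f l| := one_mul _
  have hh₂_int : IntegrableOn h₂ (Ioi 0) := by
    refine Integrable.mono hf_int' hh₂_meas.aestronglyMeasurable ?_
    filter_upwards [ae_restrict_mem measurableSet_Ioi] with l hl
    have hl0 : 0 < l := hl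
    rw [hh₂]
    simp only [Real.norm_eq_abs, abs_mul, abs_div]
    have hexp : Real.exp (-l * t) ≤ 1 := Real.exp_le_one_iff.mpr (by nlinarith)
    have hD : (0:ℝ) < l * (l ^ 2 * τ ^ 2 + 16 * π ^ 2) := by positivity
    have key : Real.exp (-l * t) / (l * (l ^ 2 * τ ^ 2 + 16 * π ^ 2)) ≤ 1 / l := by
      rw [div_le_div_iff₀ hD hl0]
      have := hDen l
      nlinarith [Real.exp_pos (-l * t)]
    rw [abs_exp, abs_of_pos hl0,
      abs_of_pos (by positivity : (0:ℝ) < l ^ 2 * τ ^ 2 + 16 * π ^ 2)]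
    calc Real.exp (-l * t) / (l * (l ^ 2 * τ ^ 2 + 16 * π ^ 2)) * |f l|
        ≤ (1 / l) * |f l| := mul_le_mul_of_nonneg_right key (abs_nonneg _)
      _ = |f l| / l := by ring
  -- put everything together
  rw [hLHS, ← hswap,
    setIntegral_congr_fun measurableSet_Ioi hpt,
    integral_add ((hh₁_int.const_mul _)) ((hh₂_int.const_mul _)),
    integral_const_mul, integral_const_mul]
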